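/- With W = V ⊥ P and φ: C(W) → M₂(C(V)) the Vahlen isomorphism, a matrix A = [[a,b],[c,d]] ∈ M₂(C(V)) satisfies: (1) A ∈ φ(C⁰(W)) if and only if a,d ∈ C⁰(V) and b,c ∈ C¹(V); (2) A ∈ φ(C¹(W)) if and only if a,d ∈ C¹(V) and b,c ∈ C⁰(V). -/
import Mathlib


open CliffordAlgebra

/-- Under the Vahlen isomorphism `φ : C(W) ≅ M₂(C(V))`, a matrix
`A = [[a,b],[c,d]]` lies in `φ(C⁰(W))` iff `a,d` are even and `b,c` are odd, and in
`φ(C¹(W))` iff `a,d` are odd and `b,c` are even (even: `x' = x`; odd: `x' = -x`). -/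
theorem stmt_9 {F : Type*} [Field F] (hchar : (2 : F) ≠ 0)
    {V : Type*} [AddCommGroup V] [Module F V] [FiniteDimensional F V]
    (S : LinearMap.BilinForm F V) (hS : ∀ x y, S x y = S y x)
    (hnd : ∀ x : V, (∀ y : V, S x y = 0) → x = 0)
    (Q : QuadraticForm F V) (hQ : ∀ v, Q v = -(S v v))
    (QW : QuadraticForm F (V × F × F))
    (hQW : ∀ p : V × F × F, QW p = -(S p.1 p.1 - p.2.1 * p.2.2))
    (g : CliffordAlgebra QW →ₐ[F] Matrix (Fin 2) (Fin 2) (CliffordAlgebra Q))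
    (hg : ∀ (v : V) (l₁ l₂ : F),
      g (ι QW (v, l₁, l₂)) = !![ι Q v, algebraMap F (CliffordAlgebra Q) l₁;
        algebraMap F (CliffordAlgebra Q) l₂, -(ι Q v)])
    (hbij : Function.Bijective g) :
    ∀ A : Matrix (Fin 2) (Fin 2) (CliffordAlgebra Q),
      ((∃ x : CliffordAlgebra QW, involute x = x ∧ g x = A) ↔
        (involute (A 0 0) = A 0 0 ∧ involute (A 1 1) = A 1 1 ∧
         involute (A 0 1) = -(A 0 1) ∧ involute (A 1 0) = -(A 1 0))) ∧
      ((∃ x : CliffordAlgebra QW, involute x = -x ∧ g x = A) ↔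
        (involute (A 0 0) = -(A 0 0) ∧ involute (A 1 1) = -(A 1 1) ∧
         involute (A 0 1) = A 0 1 ∧ involute (A 1 0) = A 1 0)) := by
  classical
  have flip : ∀ a b : CliffordAlgebra Q, a = -b → b = -a := by
    intro a b h; rw [h, neg_neg]
  set M : Matrix (Fin 2) (Fin 2) (CliffordAlgebra Q) := !![1, 0; 0, -1] with hM
  have hMM : M * M = 1 := by
    ext i j
    fin_cases i <;> fin_cases j <;>
      simp [hM, Matrix.mul_apply, Fin.sum_univ_two]
  have hmul : ∀ X Y : Matrix (Fin 2) (Fin 2) (CliffordAlgebra Q),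
      (X * Y).map (involute : CliffordAlgebra Q →ₐ[F] CliffordAlgebra Q) =
        X.map (involute : CliffordAlgebra Q →ₐ[F] CliffordAlgebra Q) *
          Y.map (involute : CliffordAlgebra Q →ₐ[F] CliffordAlgebra Q) := by
    intro X Y
    simpa only [AlgHom.mapMatrix_apply] using
      map_mul ((involute : CliffordAlgebra Q →ₐ[F] CliffordAlgebra Q).mapMatrix :
        Matrix (Fin 2) (Fin 2) (CliffordAlgebra Q) →ₐ[F] _) X Y
  have hadd : ∀ X Y : Matrix (Fin 2) (Fin 2) (CliffordAlgebra Q),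
      (X + Y).map (involute : CliffordAlgebra Q →ₐ[F] CliffordAlgebra Q) =
        X.map (involute : CliffordAlgebra Q →ₐ[F] CliffordAlgebra Q) +
          Y.map (involute : CliffordAlgebra Q →ₐ[F] CliffordAlgebra Q) := by
    intro X Y
    simpa only [AlgHom.mapMatrix_apply] using
      map_add ((involute : CliffordAlgebra Q →ₐ[F] CliffordAlgebra Q).mapMatrix :
        Matrix (Fin 2) (Fin 2) (CliffordAlgebra Q) →ₐ[F] _) X Y
  have hentry : ∀ A : Matrix (Fin 2) (Fin 2) (CliffordAlgebra Q),
      M * (A.map (involute : CliffordAlgebra Q →ₐ[F] CliffordAlgebra Q)) * M =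
        !![involute (A 0 0), -involute (A 0 1);
           -involute (A 1 0), involute (A 1 1)] := by
    intro A
    ext i j
    fin_cases i <;> fin_cases j <;>
      simp [hM, Matrix.mul_apply, Fin.sum_univ_two, Matrix.map_apply,
        Matrix.vecMul, dotProduct]
  have key : ∀ x : CliffordAlgebra QW,
      g (involute x) =
        M * ((g x).map (involute : CliffordAlgebra Q →ₐ[F] CliffordAlgebra Q)) * M := by
    intro x
    induction x using CliffordAlgebra.induction with
    | algebraMap r =>
        have h1 : ((algebraMap F (Matrix (Fin 2) (Fin 2) (CliffordAlgebra Q)) r)).map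
            (involute : CliffordAlgebra Q →ₐ[F] CliffordAlgebra Q) =
            algebraMap F (Matrix (Fin 2) (Fin 2) (CliffordAlgebra Q)) r := by
          ext i j
          simp [Matrix.algebraMap_matrix_apply,
            apply_ite (involute : CliffordAlgebra Q →ₐ[F] CliffordAlgebra Q)]
        rw [AlgHom.commutes, AlgHom.commutes, h1,
          ← Algebra.commutes r M, mul_assoc, hMM, mul_one]
    | ι v =>
        obtain ⟨w, l₁, l₂⟩ := v
        rw [involute_ι, map_neg, hg, hentry]
        ext i j
        fin_cases i <;> fin_cases j <;> simp [involute_ι]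
    | mul x y hx hy =>
        rw [map_mul, map_mul, hx, hy, map_mul, hmul]
        simp only [mul_assoc]
        rw [← mul_assoc M M
          ((g y).map (involute : CliffordAlgebra Q →ₐ[F] CliffordAlgebra Q) * M),
          hMM, one_mul]
    | add x y hx hy =>
        rw [map_add, map_add, hx, hy, map_add, hadd, mul_add, add_mul]
  intro A
  obtain ⟨x, hx⟩ := hbij.2 A
  constructor
  · constructor
    · rintro ⟨y, hy, rfl⟩
      have h := key y
      rw [hy, hentry] at h
      have h00 := congrFun (congrFun h 0) 0
      have h01 := congrFun (congrFun h 0) 1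
      have h10 := congrFun (congrFun h 1) 0
      have h11 := congrFun (congrFun h 1) 1
      exact ⟨h00.symm, h11.symm, flip _ _ h01, flip _ _ h10⟩
    · rintro ⟨h1, h2, h3, h4⟩
      refine ⟨x, hbij.1 ?_, hx⟩
      rw [key, hx, hentry]
      ext i j
      fin_cases i <;> fin_cases j <;> simp [h1, h2, h3, h4]
  · constructor
    · rintro ⟨y, hy, rfl⟩
      have h := key y
      rw [hy, map_neg, hentry] at h
      have h00 := congrFun (congrFun h 0) 0
      have h01 := congrFun (congrFun h 0) 1
      have h10 := congrFun (congrFun h 1) 0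
      have h11 := congrFun (congrFun h 1) 1
      simp only [Matrix.neg_apply, Matrix.cons_val', Matrix.cons_val_zero,
        Matrix.cons_val_one, Matrix.head_cons, Matrix.empty_val',
        Matrix.cons_val_fin_one, Matrix.head_fin_const] at h00 h01 h10 h11
      exact ⟨h00.symm, h11.symm, (neg_injective h01).symm, (neg_injective h10).symm⟩
    · rintro ⟨h1, h2, h3, h4⟩
      refine ⟨x, hbij.1 ?_, hx⟩
      rw [key, hx, hentry, map_neg, hx]
      ext i j
      fin_cases i <;> fin_cases j <;> simp [h1, h2, h3, h4]
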